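/- For a fixed finite alphabet 𝒳×𝒴 and μ ≥ 0, the function P_{XY} ↦ R_μ(P_{XY}) := min over channels P_{W|X} (with |𝒲| ≤ |𝒳||𝒴|+2) of I(W ∧ X) + μ·H(Y|W), computed with joint law P_{W|X}·P_{XY}, is continuous with respect to the total variation distance on the simplex of distributions on 𝒳×𝒴. Quantitatively: if ‖P_{XY} − P'_{XY}‖₁ ≤ ε then |R_μ(P_{XY}) − R_μ(P'_{XY})| ≤ ε', where ε' → 0 as ε → 0 (uniformly, depending only on |𝒳|, |𝒴|, μ). -/
import Mathlib


open scoped Classical BigOperators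
noncomputable section

/-- Shannon entropy (base 2) of a function on a finite type
(with the convention `0 · log 0 = 0`, automatic since `Real.logb 2 0 = 0`). -/
def ent {α : Type*} [Fintype α] (p : α → ℝ) : ℝ := - ∑ a, p a * Real.logb 2 (p a)

/-- `p` is a probability distribution on a finite type. -/
def IsDist {α : Type*} [Fintype α] (p : α → ℝ) : Prop :=
  (∀ a, 0 ≤ p a) ∧ ∑ a, p a = 1

variable {W X Y : Type*} [Fintype W] [Fintype X] [Fintype Y]

/-- marginal on `W`. -/
def mW (p : W × X × Y → ℝ) : W → ℝ := fun w => ∑ x, ∑ y, p (w, x, y)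

/-- marginal on `X`. -/
def mX (p : W × X × Y → ℝ) : X → ℝ := fun x => ∑ w, ∑ y, p (w, x, y)

/-- marginal on `X × Y`. -/
def mXY (p : W × X × Y → ℝ) : X × Y → ℝ := fun z => ∑ w, p (w, z.1, z.2)

/-- marginal on `W × X`. -/
def mWX (p : W × X × Y → ℝ) : W × X → ℝ := fun q => ∑ y, p (q.1, q.2, y)

/-- marginal on `W × Y`. -/
def mWY (p : W × X × Y → ℝ) : W × Y → ℝ := fun q => ∑ x, p (q.1, x, q.2)

/-- mutual information `I(W ∧ (X,Y))`. -/
def miW_XY (p : W × X × Y → ℝ) : ℝ := ent (mW p) + ent (mXY p) - ent p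

/-- mutual information `I(W ∧ X)`. -/
def miW_X (p : W × X × Y → ℝ) : ℝ := ent (mW p) + ent (mX p) - ent (mWX p)

/-- conditional mutual information `I(W ∧ Y | X)`. -/
def cmiWY_X (p : W × X × Y → ℝ) : ℝ :=
  ent (mWX p) + ent (mXY p) - ent (mX p) - ent p

/-- conditional entropy `H(X | W)`. -/
def condEntX_W (p : W × X × Y → ℝ) : ℝ := ent (mWX p) - ent (mW p)

/-- conditional entropy `H(Y | W)`. -/
def condEntY_W (p : W × X × Y → ℝ) : ℝ := ent (mWY p) - ent (mW p)

variable (X Y) in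
/-- auxiliary alphabet of cardinality `|𝒳||𝒴| + 2`. -/
def Waux : Type := Fin (Fintype.card X * Fintype.card Y + 2)

instance : Fintype (Waux X Y) := by unfold Waux; infer_instance

/-- a channel: nonnegative rows summing to one. -/
def IsChannel {Z W : Type*} [Fintype Z] [Fintype W] (ch : Z → W → ℝ) : Prop :=
  (∀ z w, 0 ≤ ch z w) ∧ ∀ z, ∑ w, ch z w = 1

/-- joint law of `(W, X, Y)` obtained by attaching channel `P_{W|X}` to `P_{XY}`. -/
def jointX (P : X × Y → ℝ) (ch : X → Waux X Y → ℝ) : Waux X Y × X × Y → ℝ :=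
  fun t => P (t.2.1, t.2.2) * ch t.2.1 t.1

/-- `R_μ(P_{XY})`: infimum of `I(W ∧ X) + μ·H(Y|W)` over channels `P_{W|X}`
with `|𝒲| ≤ |𝒳||𝒴|+2`, computed with joint law `P_{W|X}·P_{XY}`. -/
def Rmu (P : X × Y → ℝ) (μ : ℝ) : ℝ :=
  sInf { r : ℝ | ∃ ch : X → Waux X Y → ℝ, IsChannel ch ∧
    r = miW_X (jointX P ch) + μ * condEntY_W (jointX P ch) }

/-! ### Auxiliary lemmas for the proof of `stmt_7` -/

lemma cont_ent {α : Type*} [Fintype α] : Continuous (ent (α := α)) := by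
  unfold ent
  refine (continuous_finset_sum _ fun a _ => ?_).neg
  have : (fun p : α → ℝ => p a * Real.logb 2 (p a))
      = fun p : α → ℝ => (p a * Real.log (p a)) / Real.log 2 := by
    funext p; simp [Real.logb]; ring
  rw [this]
  exact (Real.continuous_mul_log.comp (continuous_apply a)).div_const _

lemma cont_mW : Continuous (mW (W := W) (X := X) (Y := Y)) := by
  unfold mW
  exact continuous_pi fun w => continuous_finset_sum _ fun x _ =>
    continuous_finset_sum _ fun y _ => continuous_apply _

lemma cont_mX : Continuous (mX (W := W) (X := X) (Y := Y)) := by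
  unfold mX
  exact continuous_pi fun x => continuous_finset_sum _ fun w _ =>
    continuous_finset_sum _ fun y _ => continuous_apply _

lemma cont_mWX : Continuous (mWX (W := W) (X := X) (Y := Y)) := by
  unfold mWX
  exact continuous_pi fun q => continuous_finset_sum _ fun y _ => continuous_apply _

lemma cont_mWY : Continuous (mWY (W := W) (X := X) (Y := Y)) := by
  unfold mWY
  exact continuous_pi fun q => continuous_finset_sum _ fun x _ => continuous_apply _

/-- the objective functional, as a function of the pair (source, channel). -/
def objF (μ : ℝ) (P : X × Y → ℝ) (ch : X → Waux X Y → ℝ) : ℝ :=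
  miW_X (jointX P ch) + μ * condEntY_W (jointX P ch)

lemma cont_objF (μ : ℝ) :
    Continuous (fun q : (X × Y → ℝ) × (X → Waux X Y → ℝ) => objF μ q.1 q.2) := by
  have hJ : Continuous (fun q : (X × Y → ℝ) × (X → Waux X Y → ℝ) => jointX q.1 q.2) := by
    unfold jointX
    apply continuous_pi
    intro t
    have h2 : Continuous fun q : (X × Y → ℝ) × (X → Waux X Y → ℝ) => q.2 t.2.1 t.1 :=
      ((continuous_apply_apply t.2.1 t.1).comp continuous_snd)
    exact (((continuous_apply (t.2.1, t.2.2)).comp continuous_fst)).mul h2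
  unfold objF miW_X condEntY_W
  exact (((cont_ent.comp (cont_mW.comp hJ)).add (cont_ent.comp (cont_mX.comp hJ))).sub
      (cont_ent.comp (cont_mWX.comp hJ))).add
    (continuous_const.mul ((cont_ent.comp (cont_mWY.comp hJ)).sub
      (cont_ent.comp (cont_mW.comp hJ))))

lemma Rmu_eq_sInf_image (P : X × Y → ℝ) (μ : ℝ) :
    Rmu P μ = sInf (objF μ P '' {ch : X → Waux X Y → ℝ | IsChannel ch}) := by
  unfold Rmu
  congr 1
  ext r
  constructor
  · rintro ⟨ch, h1, h2⟩; exact ⟨ch, h1, h2.symm⟩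
  · rintro ⟨ch, h1, h2⟩; exact ⟨ch, h1, h2.symm⟩

/-- `P_{XY} ↦ R_μ(P_{XY})` is (uniformly) continuous in total
variation: for every `ε' > 0` there is `ε > 0` such that
`‖P − P'‖₁ ≤ ε` implies `|R_μ(P) − R_μ(P')| ≤ ε'`. -/
theorem stmt_7 [Nonempty X] [Nonempty Y] (μ : ℝ) (hμ : 0 ≤ μ) :
    ∀ ε' > (0 : ℝ), ∃ ε > (0 : ℝ),
      ∀ P P' : X × Y → ℝ, IsDist P → IsDist P' →
        (∑ z, |P z - P' z|) ≤ ε → |Rmu P μ - Rmu P' μ| ≤ ε' := by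
  intro ε' hε'
  classical
  set D : Set (X × Y → ℝ) := {P | IsDist P} with hD
  set C : Set (X → Waux X Y → ℝ) := {ch | IsChannel ch} with hC
  -- compactness of the simplex `D`
  have hDsub : D ⊆ Set.univ.pi fun _ : X × Y => Set.Icc (0 : ℝ) 1 := by
    intro P hP z _
    refine ⟨hP.1 z, ?_⟩
    calc P z ≤ ∑ a, P a :=
          Finset.single_le_sum (fun a _ => hP.1 a) (Finset.mem_univ z)
      _ = 1 := hP.2
  have hDclosed : IsClosed D := by
    have h1 : IsClosed {P : X × Y → ℝ | ∀ a, 0 ≤ P a} := by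
      have he : {P : X × Y → ℝ | ∀ a, 0 ≤ P a} = ⋂ a, {P | 0 ≤ P a} := by
        ext P; simp
      rw [he]
      exact isClosed_iInter fun a => isClosed_le continuous_const (continuous_apply a)
    have h2 : IsClosed {P : X × Y → ℝ | ∑ a, P a = 1} :=
      isClosed_eq (continuous_finset_sum _ fun a _ => continuous_apply a) continuous_const
    have he : D = {P : X × Y → ℝ | ∀ a, 0 ≤ P a} ∩ {P | ∑ a, P a = 1} := by
      ext P; simp [hD, IsDist, Set.mem_inter_iff]
    rw [he]; exact h1.inter h2
  have hDcomp : IsCompact D :=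
    IsCompact.of_isClosed_subset (isCompact_univ_pi fun _ => isCompact_Icc) hDclosed hDsub
  -- compactness of the set of channels `C`
  have hCsub : C ⊆ Set.univ.pi fun _ : X => Set.univ.pi fun _ : Waux X Y => Set.Icc (0 : ℝ) 1 := by
    intro ch hch x _
    intro w _
    refine ⟨hch.1 x w, ?_⟩
    calc ch x w ≤ ∑ v, ch x v :=
          Finset.single_le_sum (fun v _ => hch.1 x v) (Finset.mem_univ w)
      _ = 1 := hch.2 x
  have hCclosed : IsClosed C := by
    have h1 : IsClosed {ch : X → Waux X Y → ℝ | ∀ x w, 0 ≤ ch x w} := by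
      have he : {ch : X → Waux X Y → ℝ | ∀ x w, 0 ≤ ch x w}
          = ⋂ x, ⋂ w, {ch | 0 ≤ ch x w} := by ext ch; simp
      rw [he]
      exact isClosed_iInter fun x => isClosed_iInter fun w =>
        isClosed_le continuous_const ((continuous_apply w).comp (continuous_apply x))
    have h2 : IsClosed {ch : X → Waux X Y → ℝ | ∀ x, ∑ w, ch x w = 1} := by
      have he : {ch : X → Waux X Y → ℝ | ∀ x, ∑ w, ch x w = 1}
          = ⋂ x, {ch | ∑ w, ch x w = 1} := by ext ch; simp
      rw [he]
      exact isClosed_iInter fun x => isClosed_eq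
        (continuous_finset_sum _ fun w _ => (continuous_apply w).comp (continuous_apply x))
        continuous_const
    have he : C = {ch : X → Waux X Y → ℝ | ∀ x w, 0 ≤ ch x w}
        ∩ {ch | ∀ x, ∑ w, ch x w = 1} := by
      ext ch; simp [hC, IsChannel, Set.mem_inter_iff]
    rw [he]; exact h1.inter h2
  have hCcomp : IsCompact C := IsCompact.of_isClosed_subset
    (isCompact_univ_pi fun _ => isCompact_univ_pi fun _ => isCompact_Icc) hCclosed hCsub
  -- `C` is nonempty
  have hWne : Nonempty (Waux X Y) := by unfold Waux; infer_instance
  obtain ⟨w0⟩ := hWne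
  have hCne : C.Nonempty := by
    refine ⟨fun _ w => if w = w0 then 1 else 0, ?_, ?_⟩
    · intro x w; dsimp only; split <;> norm_num
    · intro x; simp
  -- basic facts about the objective
  have hcontF : Continuous fun q : (X × Y → ℝ) × (X → Waux X Y → ℝ) => objF μ q.1 q.2 :=
    cont_objF μ
  have hbdd : ∀ P : X × Y → ℝ, BddBelow (objF μ P '' C) := fun P =>
    (hCcomp.image (hcontF.comp (Continuous.prodMk_right P))).bddBelow
  -- uniform continuity on the compact `D ×ˢ C`
  have hKcomp : IsCompact (D ×ˢ C) := hDcomp.prod hCcomp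
  have huc := hKcomp.uniformContinuousOn_of_continuous hcontF.continuousOn
  rw [Metric.uniformContinuousOn_iff] at huc
  obtain ⟨δ, hδ, H⟩ := huc ε' hε'
  refine ⟨δ / 2, by positivity, ?_⟩
  intro P P' hP hP' hTV
  have hPD : P ∈ D := hP
  have hP'D : P' ∈ D := hP'
  have hdist : dist P P' ≤ δ / 2 := by
    rw [dist_pi_le_iff (by positivity)]
    intro z
    rw [Real.dist_eq]
    calc |P z - P' z| ≤ ∑ a, |P a - P' a| :=
          Finset.single_le_sum (f := fun a => |P a - P' a|) (fun a _ => abs_nonneg _)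
            (Finset.mem_univ z)
      _ ≤ δ / 2 := hTV
  have hclose : ∀ ch ∈ C, |objF μ P ch - objF μ P' ch| ≤ ε' := by
    intro ch hch
    have h1 : ((P, ch) : (X × Y → ℝ) × (X → Waux X Y → ℝ)) ∈ D ×ˢ C := ⟨hPD, hch⟩
    have h2 : ((P', ch) : (X × Y → ℝ) × (X → Waux X Y → ℝ)) ∈ D ×ˢ C := ⟨hP'D, hch⟩
    have hd : dist ((P, ch) : (X × Y → ℝ) × (X → Waux X Y → ℝ)) (P', ch) < δ := by
      rw [Prod.dist_eq]
      simp only [dist_self]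
      rw [sup_eq_left.mpr dist_nonneg]
      linarith
    have := H _ h1 _ h2 hd
    rw [Real.dist_eq] at this
    exact this.le
  -- comparison of infima
  have key : ∀ Q Q' : X × Y → ℝ, (∀ ch ∈ C, |objF μ Q ch - objF μ Q' ch| ≤ ε') →
      sInf (objF μ Q '' C) ≤ sInf (objF μ Q' '' C) + ε' := by
    intro Q Q' h
    rw [← sub_le_iff_le_add]
    apply le_csInf (hCne.image _)
    rintro r ⟨ch, hch, rfl⟩
    have h1 : sInf (objF μ Q '' C) ≤ objF μ Q ch :=
      csInf_le (hbdd Q) (Set.mem_image_of_mem _ hch)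
    have h2 := h ch hch
    rw [abs_sub_le_iff] at h2
    linarith [h2.1]
  have hclose' : ∀ ch ∈ C, |objF μ P' ch - objF μ P ch| ≤ ε' := by
    intro ch hch
    rw [abs_sub_comm]; exact hclose ch hch
  rw [Rmu_eq_sInf_image P μ, Rmu_eq_sInf_image P' μ]
  rw [abs_sub_le_iff]
  exact ⟨by linarith [key P P' hclose], by linarith [key P' P hclose']⟩
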